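/- arXiv:1206.3052 — 6 statements merged into one kernel-verified Lean document; each statement's English description precedes it below -/
import Mathlib

section
/- Let ∼ be an SK-congruence on a GEA E and let π be an exocentral mapping on E. Then the following are equivalent: (i) π splits ∼ (i.e., e ∈ π(E), f ∈ π'(E), e ∼ f implies e = f = 0); (ii) f ∼ e ∈ π(E) implies f ∈ π(E); (iii) π(E) is hereditary (f ≲ e ∈ π(E) implies f ∈ π(E), where f ≲ e means f ∼ e₁ for some e₁ ≤ e); (iv) if e ∈ π(E) and f ∈ π'(E) then e and f are unrelated (there exist no nonzero e₁ ≤ e, f₁ ≤ f with e₁ ∼ f₁). -/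
universe u

/-- A generalized effect algebra: partial operation encoded by a definedness
relation `perp` together with a total function `op` whose values are only
meaningful when `perp` holds. -/
class GEA (E : Type u) where
  zero : E
  perp : E → E → Prop
  op : E → E → E
  perp_comm : ∀ {e f : E}, perp e f → perp f e
  op_comm : ∀ {e f : E}, perp e f → op e f = op f e
  assoc_perp₁ : ∀ {d e f : E}, perp e f → perp d (op e f) → perp d e
  assoc_perp₂ : ∀ {d e f : E}, perp e f → perp d (op e f) → perp (op d e) f
  assoc_eq : ∀ {d e f : E}, perp e f → perp d (op e f) →
    op d (op e f) = op (op d e) f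
  perp_zero : ∀ e : E, perp e zero
  op_zero : ∀ e : E, op e zero = e
  cancel : ∀ {d e f : E}, perp d e → perp d f → op d e = op d f → e = f
  pos : ∀ {e f : E}, perp e f → op e f = zero → e = zero ∧ f = zero

namespace GEA

variable {E : Type u} [GEA E]

/-- `e ≤ f` iff `e ⊕ d = f` for some `d`. -/
def le (e f : E) : Prop := ∃ d : E, perp e d ∧ op e d = f

/-- `p` is sharp. -/
def Sharp (p : E) : Prop := ∀ d : E, le d p → perp d p → d = zero

/-- `p` is principal. -/
def Principal (p : E) : Prop :=
  ∀ e f : E, le e p → le f p → perp e f → le (op e f) p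

/-- An ideal of a GEA. -/
def Ideal (S : Set E) : Prop :=
  (∀ s t : E, s ∈ S → le t s → t ∈ S) ∧
  (∀ s t : E, s ∈ S → t ∈ S → perp s t → op s t ∈ S)

/-- `E = H ⊕ K` : a direct sum decomposition into two subsets. -/
def DirectSum (H K : Set E) : Prop :=
  (∀ h k : E, h ∈ H → k ∈ K → perp h k) ∧
  (∀ e : E, ∃! p : E × E,
    p.1 ∈ H ∧ p.2 ∈ K ∧ perp p.1 p.2 ∧ op p.1 p.2 = e)

/-- `FinSum e s x` : `x` is the (well-defined) orthosum of the finite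
subfamily of `e` indexed by the finset `s`. -/
inductive FinSum {I : Type} (e : I → E) : Finset I → E → Prop
  | empty : FinSum e ∅ zero
  | cons {s : Finset I} {i : I} {x : E} (h : i ∉ s) :
      FinSum e s x → perp (e i) x → FinSum e (Finset.cons i s h) (op (e i) x)

/-- A family is orthogonal iff all its finite partial orthosums exist. -/
def OrthoFam {I : Type} (e : I → E) : Prop := ∀ s : Finset I, ∃ x : E, FinSum e s x

/-- `m` is the orthosum of the family `e` : the family is orthogonal and `m`
is the supremum of its finite partial orthosums. -/
def IsOrthosum {I : Type} (e : I → E) (m : E) : Prop :=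
  OrthoFam e ∧ (∀ (s : Finset I) (x : E), FinSum e s x → le x m) ∧
  ∀ b : E, (∀ (s : Finset I) (x : E), FinSum e s x → le x b) → le m b

/-- Dedekind orthocompleteness. -/
def DedekindOC (E : Type u) [GEA E] : Prop :=
  ∀ (I : Type) (e : I → E), OrthoFam e →
    (∃ b : E, ∀ (s : Finset I) (x : E), FinSum e s x → le x b) →
    ∃ m : E, IsOrthosum e m

/-- A Sherstnev–Kalinin congruence on a GEA. -/
structure SKCong (E : Type u) [GEA E] (sim : E → E → Prop) : Prop where
  refl : ∀ e : E, sim e e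
  symm : ∀ {e f : E}, sim e f → sim f e
  trans : ∀ {d e f : E}, sim d e → sim e f → sim d f
  sk1 : ∀ {e : E}, sim e zero → e = zero
  sk2 : ∀ {I : Type} (e f : I → E) (se sf : E), IsOrthosum e se →
    IsOrthosum f sf → (∀ i : I, sim (e i) (f i)) → sim se sf
  sk3d : ∀ {p s t : E}, perp s t → sim p (op s t) →
    ∃ e f : E, perp e f ∧ op e f = p ∧ sim e s ∧ sim f t
  sk3e : ∀ {e f s t : E}, perp e f → perp s t → op e f = op s t →
    ∃ e₁ e₂ f₁ f₂ : E, perp e₁ e₂ ∧ op e₁ e₂ = e ∧ perp f₁ f₂ ∧ op f₁ f₂ = f ∧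
      perp e₁ f₁ ∧ sim s (op e₁ f₁) ∧ perp e₂ f₂ ∧ sim t (op e₂ f₂)
  sk4a : ∀ {e f : E}, ¬ perp e f →
    ∃ e₁ f₁ : E, e₁ ≠ zero ∧ f₁ ≠ zero ∧ le e₁ e ∧ le f₁ f ∧ sim e₁ f₁
  sk4b : ∀ {e f : E}, ¬ le e f →
    ∃ e₁ d₁ : E, e₁ ≠ zero ∧ d₁ ≠ zero ∧ le e₁ e ∧ perp d₁ f ∧ sim e₁ d₁

/-- Subequivalence: `f ≲ e`. -/
def Subeq (sim : E → E → Prop) (f e : E) : Prop :=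
  ∃ e₁ : E, le e₁ e ∧ sim f e₁

/-- `e` and `f` are related. -/
def Related (sim : E → E → Prop) (e f : E) : Prop :=
  ∃ e₁ f₁ : E, e₁ ≠ zero ∧ f₁ ≠ zero ∧ le e₁ e ∧ le f₁ f ∧ sim e₁ f₁

/-- A hereditary subset. -/
def Hereditary (sim : E → E → Prop) (H : Set E) : Prop :=
  ∀ h e : E, h ∈ H → Subeq sim e h → e ∈ H

/-- An exocentral mapping on a GEA. -/
structure Exocentral (π : E → E) : Prop where
  perp_map : ∀ {e f : E}, perp e f → perp (π e) (π f)
  op_map : ∀ {e f : E}, perp e f → π (op e f) = op (π e) (π f)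
  idem : ∀ e : E, π (π e) = π e
  dec : ∀ e : E, le (π e) e
  orth : ∀ {e f : E}, π e = e → π f = zero → perp e f

/-- `π'` is the complementary mapping of `π` : `π'e = e ⊖ πe`. -/
def IsComplMap (π π' : E → E) : Prop :=
  ∀ e : E, perp (π e) (π' e) ∧ op (π e) (π' e) = e

/-- `π` (with complement `π'`) splits the equivalence relation `sim`. -/
def Splits (sim : E → E → Prop) (π π' : E → E) : Prop :=
  ∀ e f : E, e ∈ Set.range π → f ∈ Set.range π' → sim e f →
    e = zero ∧ f = zero

/-- A hull system `(η_e)_{e ∈ E}` on a GEA, where `η e : E → E` is the hull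
mapping indexed by `e`. -/
structure HullSystem (E : Type u) [GEA E] (η : E → E → E) : Prop where
  exo : ∀ e : E, Exocentral (η e)
  hs1 : ∀ x : E, η zero x = zero
  hs2 : ∀ e : E, η e e = e
  hs3 : ∀ e f x : E, η (η e f) x = η e (η f x)
  hs3' : ∀ e f x : E, η e (η f x) = η f (η e x)

/-- A GEX-orthogonal family. -/
def GEXOrtho {I : Type} (e : I → E) : Prop :=
  ∃ π : I → E → E, (∀ i : I, Exocentral (π i)) ∧
    (∀ i j : I, i ≠ j → ∀ x : E, π i (π j x) = zero) ∧
    ∀ i : I, π i (e i) = e i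

/-- Central orthocompleteness. -/
def CentrallyOC (E : Type u) [GEA E] : Prop :=
  ∀ (I : Type) (e : I → E), GEXOrtho e →
    (∃ m : E, IsOrthosum e m) ∧
    ∀ f : E, (∀ i : I, perp f (e i)) → ∀ m : E, IsOrthosum e m → perp f m

/-- A dimension equivalence relation: an SK-congruence satisfying SK4a′. -/
def IsDER (E : Type u) [GEA E] (sim : E → E → Prop) : Prop :=
  SKCong E sim ∧
  ∀ e f : E, ¬ Related sim e f →
    ∃ π π' : E → E, Exocentral π ∧ IsComplMap π π' ∧ Splits sim π π' ∧
      π e = e ∧ π' f = f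

/-- `η` is the hull system determined by the hull-determining set `Σ∼(E)` of
exocentral mappings splitting `sim` : each `η e` belongs to `Σ∼(E)` and is the
smallest member of `Σ∼(E)` fixing `e`. -/
def SigmaHull (sim : E → E → Prop) (η : E → E → E) : Prop :=
  (∀ e : E, ∃ π' : E → E, IsComplMap (η e) π' ∧ Splits sim (η e) π') ∧
  ∀ (e : E) (π π' : E → E), Exocentral π → IsComplMap π π' →
    Splits sim π π' → π e = e →
      (∀ x : E, η e (π x) = η e x) ∧ (∀ x : E, π (η e x) = η e x)

/-- A simple element. -/
def Simple (sim : E → E → Prop) (k : E) : Prop :=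
  ∀ e e' : E, perp e e' → op e e' = k → ¬ Related sim e e'

/-- A finite element. -/
def Finite' (sim : E → E → Prop) (f : E) : Prop :=
  ∀ e : E, le e f → sim e f → e = f

end GEA

namespace GEAHelper

open GEA

variable {E : Type u} [GEA E]

lemma perp_zero' (e : E) : perp (zero : E) e := perp_comm (perp_zero e)

lemma zero_op (e : E) : op (zero : E) e = e := by
  rw [op_comm (perp_zero' e), op_zero]

lemma le_refl (e : E) : le e e := ⟨zero, perp_zero e, op_zero e⟩

lemma rearrange {a b x y : E} (hab : perp a b) (hxy : perp x y)
    (h : perp (op a b) (op x y)) :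
    perp a x ∧ perp b y ∧ perp (op a x) (op b y) ∧
      op (op a b) (op x y) = op (op a x) (op b y) := by
  have h1 : perp (op x y) (op a b) := perp_comm h
  have h2 : perp (op x y) a := assoc_perp₁ hab h1
  have h3 : perp a (op x y) := perp_comm h2
  have h4 : perp a x := assoc_perp₁ hxy h3
  have h5 : perp (op (op x y) a) b := assoc_perp₂ hab h1
  have h9 : perp b (op x y) := by
    have := perp_comm h5
    -- perp b (op (op x y) a)
    exact assoc_perp₁ h2 this
  have hby : perp b y := by
    have : perp b (op y x) := by rwa [op_comm hxy] at h9
    exact assoc_perp₁ (perp_comm hxy) this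
  have habx : perp (op a b) x := assoc_perp₁ hxy h
  have h6 : perp (op a x) y := assoc_perp₂ hxy h3
  -- (a⊕b)⊕x = (a⊕x)⊕b
  have hB : op (op a b) x = op (op a x) b := by
    rw [op_comm habx, op_comm h4]
    exact assoc_eq hab (perp_comm habx)
  -- perp (a⊕x) b
  have hAxb : perp (op a x) b := by
    have e1 : op (op x y) a = op (op a x) y := by
      rw [op_comm h2, assoc_eq hxy h3]
    rw [e1] at h5
    have := perp_comm h5
    exact perp_comm (assoc_perp₁ h6 this)
  -- perp ((a⊕x)⊕b) y
  have hAxby : perp (op (op a x) b) y := by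
    have := assoc_perp₂ hxy h
    rwa [hB] at this
  -- perp (a⊕x) (b⊕y)
  have hmain : perp (op a x) (op b y) := by
    have p1 : perp y (op (op a x) b) := perp_comm hAxby
    have p2 : perp y (op a x) := assoc_perp₁ hAxb p1
    have p3 : perp (op y (op a x)) b := assoc_perp₂ hAxb p1
    have p4 : perp b (op y (op a x)) := perp_comm p3
    have p5 : perp (op b y) (op a x) := assoc_perp₂ p2 p4
    exact perp_comm p5
  refine ⟨h4, hby, hmain, ?_⟩
  calc op (op a b) (op x y) = op (op (op a b) x) y := assoc_eq hxy h
    _ = op (op (op a x) b) y := by rw [hB]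
    _ = op (op a x) (op b y) := (assoc_eq hby hmain).symm

variable {π π' : E → E} (hπ : Exocentral π) (hc : IsComplMap π π')

include hπ in
lemma mem_range_iff {e : E} : e ∈ Set.range π ↔ π e = e := by
  constructor
  · rintro ⟨x, rfl⟩; exact hπ.idem x
  · intro h; exact ⟨e, h⟩

include hπ hc in
lemma pi_pi' (g : E) : π (π' g) = zero := by
  obtain ⟨hp, he⟩ := hc g
  have h1 : π g = op (π (π g)) (π (π' g)) := by
    conv_lhs => rw [← he]
    exact hπ.op_map hp
  rw [hπ.idem] at h1
  have h2 : op (π g) (π (π' g)) = op (π g) zero := by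
    rw [op_zero, ← h1]
  have hperp : perp (π (π g)) (π (π' g)) := hπ.perp_map hp
  rw [hπ.idem] at hperp
  exact cancel hperp (perp_zero _) h2

include hπ hc in
lemma mem_range'_iff {f : E} : f ∈ Set.range π' ↔ π f = zero := by
  constructor
  · rintro ⟨x, rfl⟩; exact pi_pi' hπ hc x
  · intro h
    obtain ⟨hp, he⟩ := hc f
    refine ⟨f, ?_⟩
    rw [h, zero_op] at he
    exact he

include hπ hc in
lemma down_closed {d e : E} (hde : le d e) (he : π e = e) : π d = d := by
  obtain ⟨c, hdc, hop⟩ := hde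
  obtain ⟨hpd, hd⟩ := hc d
  obtain ⟨hpc, hcc⟩ := hc c
  have hdc' : perp (op (π d) (π' d)) (op (π c) (π' c)) := by
    rw [hd, hcc]; exact hdc
  obtain ⟨hax, hby, hperp, heq⟩ := rearrange hpd hpc hdc'
  rw [hd, hcc, hop] at heq
  have hpe : π e = op (π d) (π c) := by
    rw [← hop]; exact hπ.op_map hdc
  rw [he] at hpe
  have : op (op (π d) (π c)) (op (π' d) (π' c)) = op (op (π d) (π c)) zero := by
    rw [op_zero, ← heq, ← hpe]
  have h0 := cancel hperp (perp_zero _) this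
  have hbz := (pos hby h0).1
  rw [hbz, op_zero] at hd
  exact hd

include hπ hc in
lemma down_closed' {d e : E} (hde : le d e) (he : π e = zero) : π d = zero := by
  obtain ⟨c, hdc, hop⟩ := hde
  have hpe : π e = op (π d) (π c) := by
    rw [← hop]; exact hπ.op_map hdc
  rw [he] at hpe
  exact (pos (hπ.perp_map hdc) hpe.symm).1

end GEAHelper

/-- characterizations of an exocentral mapping splitting an
SK-congruence. -/
theorem splits_iff_characterizations {E : Type u} [GEA E]
    (sim : E → E → Prop) (hsim : GEA.SKCong E sim)
    (π π' : E → E) (hπ : GEA.Exocentral π) (hc : GEA.IsComplMap π π') :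
    (GEA.Splits sim π π' ↔
      ∀ e f : E, e ∈ Set.range π → sim f e → f ∈ Set.range π) ∧
    ((∀ e f : E, e ∈ Set.range π → sim f e → f ∈ Set.range π) ↔
      GEA.Hereditary sim (Set.range π)) ∧
    (GEA.Hereditary sim (Set.range π) ↔
      ∀ e f : E, e ∈ Set.range π → f ∈ Set.range π' →
        ¬ GEA.Related sim e f) := by
  classical
  open GEA GEAHelper in
  -- four implications in a cycle
  have Imp12 : GEA.Splits sim π π' →
      ∀ e f : E, e ∈ Set.range π → sim f e → f ∈ Set.range π := by
    intro hs e f he hfe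
    rw [mem_range_iff hπ] at he
    obtain ⟨hp, hf⟩ := hc f
    have hef : sim e (GEA.op (π f) (π' f)) := by rw [hf]; exact hsim.symm hfe
    obtain ⟨a, b, hab, hopab, ha, hb⟩ := hsim.sk3d hp hef
    have hble : GEA.le b e := ⟨a, GEA.perp_comm hab, by rw [GEA.op_comm (GEA.perp_comm hab), hopab]⟩
    have hbfix : π b = b := down_closed hπ hc hble he
    have hbz := hs b (π' f) ⟨b, hbfix⟩ ⟨f, rfl⟩ hb
    rw [mem_range_iff hπ]
    rw [← hf, hbz.2, GEA.op_zero, hπ.idem]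
  have Imp23 : (∀ e f : E, e ∈ Set.range π → sim f e → f ∈ Set.range π) →
      GEA.Hereditary sim (Set.range π) := by
    intro hii h e hh ⟨e₁, he₁, hse⟩
    rw [mem_range_iff hπ] at hh
    have : π e₁ = e₁ := down_closed hπ hc he₁ hh
    exact hii e₁ e ⟨e₁, this⟩ hse
  have Imp34 : GEA.Hereditary sim (Set.range π) →
      ∀ e f : E, e ∈ Set.range π → f ∈ Set.range π' → ¬ GEA.Related sim e f := by
    intro hher e f he hf ⟨e₁, f₁, he₁z, hf₁z, he₁, hf₁, hs⟩
    rw [mem_range_iff hπ] at he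
    rw [mem_range'_iff hπ hc] at hf
    have he₁fix : π e₁ = e₁ := down_closed hπ hc he₁ he
    have hf₁z' : π f₁ = GEA.zero := down_closed' hπ hc hf₁ hf
    have hf₁mem : f₁ ∈ Set.range π :=
      hher e₁ f₁ ⟨e₁, he₁fix⟩ ⟨e₁, le_refl e₁, hsim.symm hs⟩
    rw [mem_range_iff hπ] at hf₁mem
    exact hf₁z (by rw [← hf₁mem, hf₁z'])
  have Imp41 : (∀ e f : E, e ∈ Set.range π → f ∈ Set.range π' → ¬ GEA.Related sim e f) →
      GEA.Splits sim π π' := by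
    intro hiv e f he hf hs
    by_cases hez : e = GEA.zero
    · subst hez
      exact ⟨rfl, hsim.sk1 (hsim.symm hs)⟩
    by_cases hfz : f = GEA.zero
    · subst hfz
      exact ⟨hsim.sk1 hs, rfl⟩
    exact absurd ⟨e, f, hez, hfz, le_refl e, le_refl f, hs⟩ (hiv e f he hf)
  exact ⟨⟨Imp12, fun h => Imp41 (Imp34 (Imp23 h))⟩,
    ⟨Imp23, fun h => Imp12 (Imp41 (Imp34 h))⟩,
    ⟨Imp34, fun h => Imp23 (Imp12 (Imp41 h))⟩⟩
end

section
/- Let ∼ be an SK-congruence on a GEA E and π an exocentral mapping. Then π splits ∼ if and only if for all e, f ∈ E: e ∼ f ⟺ (πe ∼ πf and π'e ∼ π'f). -/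
universe u

section Aux
open GEA
variable {E : Type u} [GEA E]

lemma g_zero_perp (x : E) : perp zero x := perp_comm (perp_zero x)

lemma g_zero_op (x : E) : op zero x = x := by
  rw [op_comm (g_zero_perp x), op_zero]

lemma g_le_refl (x : E) : le x x := ⟨zero, perp_zero x, op_zero x⟩

lemma g_perp_of_op_left {d e f : E} (hde : perp d e) (h : perp (op d e) f) :
    perp e f := by
  have h1 : perp f (op e d) := by rw [← op_comm hde]; exact perp_comm h
  exact perp_comm (assoc_perp₁ (perp_comm hde) h1)

lemma g_perp_assoc {d e f : E} (hde : perp d e) (h : perp (op d e) f) :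
    perp d (op e f) := by
  have h1 : perp f (op e d) := by rw [← op_comm hde]; exact perp_comm h
  have hfe : perp f e := assoc_perp₁ (perp_comm hde) h1
  have h2 : perp (op f e) d := assoc_perp₂ (perp_comm hde) h1
  have h3 := perp_comm h2
  rwa [op_comm hfe] at h3

lemma g_op_assoc {d e f : E} (hde : perp d e) (h : perp (op d e) f) :
    op (op d e) f = op d (op e f) :=
  (assoc_eq (g_perp_of_op_left hde h) (g_perp_assoc hde h)).symm

lemma g_le_trans {x y z : E} (h1 : le x y) (h2 : le y z) : le x z := by
  obtain ⟨p, hp, hpe⟩ := h1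
  obtain ⟨q, hq, hqe⟩ := h2
  subst hpe
  exact ⟨op p q, g_perp_assoc hp hq, by rw [← g_op_assoc hp hq, hqe]⟩

lemma g_le_antisymm {x y : E} (h1 : le x y) (h2 : le y x) : x = y := by
  obtain ⟨p, hp, hpe⟩ := h1
  obtain ⟨q, hq, hqe⟩ := h2
  subst hpe
  have hpq : perp p q := g_perp_of_op_left hp hq
  have hx : perp x (op p q) := g_perp_assoc hp hq
  have heq : op x (op p q) = op x zero := by
    rw [← g_op_assoc hp hq, hqe, op_zero]
  have h0 := cancel hx (perp_zero x) heq
  obtain ⟨hp0, -⟩ := pos hpq h0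
  rw [hp0, op_zero]

lemma g_pi_compl {π π' : E → E} (hπ : Exocentral π) (hc : IsComplMap π π')
    (x : E) : π (π' x) = zero := by
  obtain ⟨h1, h2⟩ := hc x
  have h3 : π x = op (π x) (π (π' x)) := by
    conv_lhs => rw [← h2]
    rw [hπ.op_map h1, hπ.idem]
  have h4 : perp (π x) (π (π' x)) := by
    have h5 := hπ.perp_map h1; rwa [hπ.idem] at h5
  exact (cancel (perp_zero _) h4 (by rw [op_zero, ← h3])).symm

lemma g_compl_compl {π π' : E → E} (hπ : Exocentral π) (hc : IsComplMap π π')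
    (x : E) : π' (π' x) = π' x := by
  have h := (hc (π' x)).2
  rwa [g_pi_compl hπ hc, g_zero_op] at h

lemma g_fix_of_le {π π' : E → E} (hπ : Exocentral π) (hc : IsComplMap π π')
    {a f : E} (h : le a (π f)) : π a = a := by
  obtain ⟨h1, h2⟩ := hc a
  have hle1 : le (π' a) a :=
    ⟨π a, perp_comm h1, by rw [op_comm (perp_comm h1), h2]⟩
  obtain ⟨d, hd, hde⟩ := g_le_trans hle1 h
  have h3 : π d = op (π' a) d := by
    have h4 := hπ.op_map hd
    rw [g_pi_compl hπ hc, g_zero_op, hde, hπ.idem] at h4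
    rw [← h4]; exact hde.symm
  have h5 : le (op (π' a) d) d := by rw [← h3]; exact hπ.dec d
  have h6 : le d (op (π' a) d) := ⟨π' a, perp_comm hd, op_comm (perp_comm hd)⟩
  have h7 : op (π' a) d = d := g_le_antisymm h5 h6
  have h8 : π' a = zero := by
    apply cancel (perp_comm hd) (perp_zero d)
    rw [op_zero, op_comm (perp_comm hd)]
    exact h7
  rw [h8, op_zero] at h2
  exact h2

lemma g_compl_fix_of_le {π π' : E → E} (hπ : Exocentral π) (hc : IsComplMap π π')
    {a f : E} (h : le a (π' f)) : π a = zero ∧ π' a = a := by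
  obtain ⟨c, hac, hce⟩ := h
  have h1 : op (π a) (π c) = zero := by
    rw [← hπ.op_map hac, hce, g_pi_compl hπ hc]
  have h2 := pos (hπ.perp_map hac) h1
  refine ⟨h2.1, ?_⟩
  have h3 := (hc a).2
  rwa [h2.1, g_zero_op] at h3

lemma g_bool_finsum {a b : E} (hab : perp a b) :
    ∀ {s : Finset Bool} {x : E}, FinSum (fun i : Bool => cond i a b) s x →
      (s = ∅ ∧ x = zero) ∨ (s = {true} ∧ x = a) ∨ (s = {false} ∧ x = b) ∨
      (s = {true, false} ∧ x = op a b) := by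
  intro s x h
  induction h with
  | empty => exact Or.inl ⟨rfl, rfl⟩
  | @cons s i x hni hfs hp ih =>
    rcases ih with ⟨hs, hx⟩ | ⟨hs, hx⟩ | ⟨hs, hx⟩ | ⟨hs, hx⟩ <;> subst hs <;> subst hx
    · cases i with
      | true =>
        refine Or.inr (Or.inl ⟨?_, op_zero a⟩)
        rw [Finset.cons_eq_insert]; rfl
      | false =>
        refine Or.inr (Or.inr (Or.inl ⟨?_, op_zero b⟩))
        rw [Finset.cons_eq_insert]; rfl
    · cases i with
      | true => simp at hni
      | false =>
        refine Or.inr (Or.inr (Or.inr ⟨?_, ?_⟩))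
        · rw [Finset.cons_eq_insert]; ext j; cases j <;> simp
        · exact op_comm hp
    · cases i with
      | true =>
        refine Or.inr (Or.inr (Or.inr ⟨?_, rfl⟩))
        rw [Finset.cons_eq_insert]
      | false => simp at hni
    · cases i <;> simp at hni

lemma g_finsum_pair {a b : E} (hab : perp a b) :
    FinSum (fun i : Bool => cond i a b) {true, false} (op a b) := by
  have h0 : FinSum (fun i : Bool => cond i a b) ∅ zero := FinSum.empty
  have h1 : FinSum (fun i : Bool => cond i a b)
      (Finset.cons false ∅ (Finset.notMem_empty _)) (op b zero) :=
    FinSum.cons _ h0 (perp_zero b)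
  have h2 : FinSum (fun i : Bool => cond i a b)
      (Finset.cons true (Finset.cons false ∅ (Finset.notMem_empty _)) (by simp))
      (op a (op b zero)) :=
    FinSum.cons _ h1 (by rw [op_zero]; exact hab)
  have hset : (Finset.cons true (Finset.cons false ∅ (Finset.notMem_empty _))
      (by simp)) = ({true, false} : Finset Bool) := by
    rw [Finset.cons_eq_insert, Finset.cons_eq_insert]
    rfl
  rw [op_zero] at h2
  rwa [hset] at h2

lemma g_finsum_singleton {a b : E} (i : Bool) :
    FinSum (fun i : Bool => cond i a b) {i} (op (cond i a b) zero) := by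
  have h1 : FinSum (fun i : Bool => cond i a b)
      (Finset.cons i ∅ (Finset.notMem_empty _)) (op (cond i a b) zero) :=
    FinSum.cons _ FinSum.empty (perp_zero _)
  have hset : (Finset.cons i ∅ (Finset.notMem_empty i)) = ({i} : Finset Bool) := by
    rw [Finset.cons_eq_insert]; rfl
  rwa [hset] at h1

lemma g_orthosum_pair {a b : E} (hab : perp a b) :
    IsOrthosum (fun i : Bool => cond i a b) (op a b) := by
  have hcases : ∀ s : Finset Bool,
      s = ∅ ∨ s = {true} ∨ s = {false} ∨ s = {true, false} := by decide
  refine ⟨?_, ?_, ?_⟩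
  · intro s
    rcases hcases s with h | h | h | h <;> subst h
    · exact ⟨zero, FinSum.empty⟩
    · exact ⟨op a zero, g_finsum_singleton true⟩
    · exact ⟨op b zero, g_finsum_singleton false⟩
    · exact ⟨op a b, g_finsum_pair hab⟩
  · intro s x h
    rcases g_bool_finsum hab h with ⟨-, hx⟩ | ⟨-, hx⟩ | ⟨-, hx⟩ | ⟨-, hx⟩ <;> subst hx
    · exact ⟨op a b, g_zero_perp _, g_zero_op _⟩
    · exact ⟨b, hab, rfl⟩
    · exact ⟨a, perp_comm hab, op_comm (perp_comm hab)⟩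
    · exact g_le_refl _
  · intro c hcb
    exact hcb {true, false} (op a b) (g_finsum_pair hab)

lemma g_sim_add {sim : E → E → Prop} (hsim : SKCong E sim) {a b a' b' : E}
    (hab : perp a b) (hab' : perp a' b') (h1 : sim a a') (h2 : sim b b') :
    sim (op a b) (op a' b') :=
  hsim.sk2 (fun i : Bool => cond i a b) (fun i : Bool => cond i a' b') _ _
    (g_orthosum_pair hab) (g_orthosum_pair hab')
    (by intro i; cases i; exacts [h2, h1])

end Aux

open GEA

/-- `π` splits `∼` iff `∼` works coordinatewise for the direct
sum decomposition induced by `π`. -/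
theorem splits_iff_coordinatewise {E : Type u} [GEA E]
    (sim : E → E → Prop) (hsim : GEA.SKCong E sim)
    (π π' : E → E) (hπ : GEA.Exocentral π) (hc : GEA.IsComplMap π π') :
    GEA.Splits sim π π' ↔
      ∀ e f : E, sim e f ↔ (sim (π e) (π f) ∧ sim (π' e) (π' f)) := by 
  constructor
  · intro hsp e f
    constructor
    · intro hef
      obtain ⟨hf1, hf2⟩ := hc f
      have hef' : sim e (op (π f) (π' f)) := by rwa [hf2]
      obtain ⟨u, v, huv, huve, hu, hv⟩ := hsim.sk3d hf1 hef'
      -- analyze u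
      obtain ⟨hu1, hu2⟩ := hc u
      have hu' : sim (π f) (op (π u) (π' u)) := by
        rw [hu2]; exact hsim.symm hu
      obtain ⟨p, q, hpq, hpqe, hp, hq⟩ := hsim.sk3d hu1 hu'
      have hqle : GEA.le q (π f) :=
        ⟨p, perp_comm hpq, by rw [op_comm (perp_comm hpq), hpqe]⟩
      have hqfix : π q = q := g_fix_of_le hπ hc hqle
      obtain ⟨hq0, hpu0⟩ :=
        hsp q (π' u) ⟨q, hqfix⟩ ⟨π' u, g_compl_compl hπ hc u⟩ hq
      rw [hpu0, op_zero] at hu2   -- hu2 : π u = u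
      rw [hq0, op_zero] at hpqe   -- hpqe : p = π f
      rw [hpqe, hu2] at hp        -- hp : sim (π f) u
      -- analyze v
      obtain ⟨hv1, hv2⟩ := hc v
      have hv' : sim (π' f) (op (π v) (π' v)) := by
        rw [hv2]; exact hsim.symm hv
      obtain ⟨r, w, hrw, hrwe, hr, hw⟩ := hsim.sk3d hv1 hv'
      have hrle : GEA.le r (π' f) := ⟨w, hrw, hrwe⟩
      obtain ⟨-, hr'⟩ := g_compl_fix_of_le hπ hc hrle
      obtain ⟨hpv0, hr0⟩ :=
        hsp (π v) r ⟨v, rfl⟩ ⟨r, hr'⟩ (hsim.symm hr)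
      rw [hpv0, g_zero_op] at hv2   -- hv2 : π' v = v
      rw [hr0, g_zero_op] at hrwe   -- hrwe : w = π' f
      rw [hrwe, hv2] at hw          -- hw : sim (π' f) v
      -- compute π e and π' e
      have hπe : π e = u := by
        have h := hπ.op_map huv
        rwa [huve, hu2, hpv0, op_zero] at h
      obtain ⟨he1, he2⟩ := hc e
      rw [hπe] at he1 he2
      have hπ'e : π' e = v := cancel he1 huv (he2.trans huve.symm)
      constructor
      · rw [hπe]; exact hsim.symm hp
      · rw [hπ'e]; exact hsim.symm hw
    · rintro ⟨h1, h2⟩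
      have h := g_sim_add hsim (hc e).1 (hc f).1 h1 h2
      rwa [(hc e).2, (hc f).2] at h
  · intro hco e f he hf hef
    obtain ⟨x, hx⟩ := he
    obtain ⟨y, hy⟩ := hf
    have hπe : π e = e := by rw [← hx, hπ.idem]
    have hπf : π f = zero := by rw [← hy]; exact g_pi_compl hπ hc y
    have hπ'f : π' f = f := by
      have h := (hc f).2; rwa [hπf, g_zero_op] at h
    have hπ'e : π' e = zero := by
      have h := (hc e).2
      have hp1 := (hc e).1
      rw [hπe] at h hp1
      exact cancel hp1 (perp_zero e) (by rw [op_zero]; exact h)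
    obtain ⟨hA, hB⟩ := (hco e f).1 hef
    rw [hπe, hπf] at hA
    rw [hπ'e, hπ'f] at hB
    exact ⟨hsim.sk1 hA, hsim.sk1 (hsim.symm hB)⟩
end

section
/- Let ∼ be an SK-congruence on a GEA E. Then the set Σ∼(E) of exocentral mappings that split ∼ is a boolean subalgebra of the boolean algebra GEX(E) of exocentral mappings: it contains 0 and 1, is closed under complementation π ↦ π', and is closed under meets (compositions) π∧ξ = π∘ξ. -/
universe u

namespace GEA

variable {E : Type u} [GEA E]

lemma perp_zero' (e : E) : perp zero e := perp_comm (perp_zero e)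

lemma zero_op (e : E) : op zero e = e := by
  rw [op_comm (perp_zero' e), op_zero]

lemma le_op_left {a b : E} (h : perp a b) : le a (op a b) := ⟨b, h, rfl⟩

lemma le_op_right {a b : E} (h : perp a b) : le b (op a b) :=
  ⟨a, perp_comm h, op_comm (perp_comm h)⟩

lemma assoc' {a b c : E} (hab : perp a b) (h : perp (op a b) c) :
    perp b c ∧ perp a (op b c) ∧ op (op a b) c = op a (op b c) := by
  have h1 : perp c (op a b) := perp_comm h
  have h2 : perp c (op b a) := by rwa [op_comm hab] at h1
  have hcb : perp c b := assoc_perp₁ (perp_comm hab) h2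
  have hbc : perp b c := perp_comm hcb
  have h3 : perp (op c b) a := assoc_perp₂ (perp_comm hab) h2
  have h4 : perp a (op c b) := perp_comm h3
  have h5 : perp a (op b c) := by rwa [op_comm hcb] at h4
  exact ⟨hbc, h5, (assoc_eq hbc h5).symm⟩

lemma perp_of_le {x s y t : E} (hxs : le x s) (hyt : le y t) (hst : perp s t) :
    perp x y := by
  obtain ⟨u, hxu, rfl⟩ := hxs
  obtain ⟨v, hyv, rfl⟩ := hyt
  have h1 : perp (op y v) x := assoc_perp₁ hxu (perp_comm hst)
  exact assoc_perp₁ hyv (perp_comm h1)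

lemma le_trans' {x y z : E} (h1 : le x y) (h2 : le y z) : le x z := by
  obtain ⟨u, hxu, rfl⟩ := h1
  obtain ⟨v, hv, rfl⟩ := h2
  obtain ⟨-, h5, h6⟩ := assoc' hxu hv
  exact ⟨op u v, h5, h6.symm⟩

lemma le_antisymm' {x y : E} (h1 : le x y) (h2 : le y x) : x = y := by
  obtain ⟨u, hxu, rfl⟩ := h1
  obtain ⟨v, hv, hx⟩ := h2
  obtain ⟨huv, h5, h6⟩ := assoc' hxu hv
  have h7 : op x (op u v) = op x zero := by rw [op_zero, ← h6, hx]
  have h8 : op u v = zero := cancel h5 (perp_zero x) h7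
  obtain ⟨hu0, -⟩ := pos huv h8
  rw [hu0, op_zero]

lemma exchange {a a' b b' : E} (haa : perp a a') (hbb : perp b b')
    (h : perp (op a a') (op b b')) :
    perp (op a b) (op a' b') ∧
      op (op a b) (op a' b') = op (op a a') (op b b') := by
  obtain ⟨h1, hA, e1⟩ := assoc' haa h
  -- h1 : perp a' (op b b'), hA : perp a (op a' (op b b'))
  have ha'b : perp a' b := assoc_perp₁ hbb h1
  have e2 : op a' (op b b') = op (op a' b) b' := assoc_eq hbb h1
  have hperp1 : perp (op a' b) b' := assoc_perp₂ hbb h1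
  have hperp1' : perp (op b a') b' := by rwa [op_comm ha'b] at hperp1
  obtain ⟨ha'b', hB, e3⟩ := assoc' (perp_comm ha'b) hperp1'
  -- hB : perp b (op a' b'), e3 : op (op b a') b' = op b (op a' b')
  have key : op a' (op b b') = op b (op a' b') := by
    rw [e2, op_comm ha'b, e3]
  have hA' : perp a (op b (op a' b')) := by rwa [key] at hA
  refine ⟨assoc_perp₂ hB hA', ?_⟩
  rw [e1, key, assoc_eq hB hA']

lemma exo_map_zero {π : E → E} (hπ : Exocentral π) : π zero = zero := by
  have h := hπ.op_map (perp_zero (zero : E))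
  rw [op_zero] at h
  have hp : perp (π zero) (π zero) := hπ.perp_map (perp_zero zero)
  have : op (π zero) (π zero) = op (π zero) zero := by rw [← h, op_zero]
  exact cancel hp (perp_zero _) this

lemma compl_map_zero {π π' : E → E} (hπ : Exocentral π) (hc : IsComplMap π π')
    (e : E) : π (π' e) = zero := by
  obtain ⟨hp, he⟩ := hc e
  have h1 : π e = op (π (π e)) (π (π' e)) := by
    conv_lhs => rw [← he, hπ.op_map hp]
  rw [hπ.idem] at h1
  have hp2 : perp (π e) (π (π' e)) := by
    have := hπ.perp_map hp; rwa [hπ.idem] at this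
  have : op (π e) (π (π' e)) = op (π e) zero := by rw [← h1, op_zero]
  exact cancel hp2 (perp_zero _) this

lemma compl_map_pi {π π' : E → E} (hc : IsComplMap π π') {e : E}
    (he : π e = e) : π' e = zero := by
  obtain ⟨hp, heq⟩ := hc e
  rw [he] at hp heq
  have : op e (π' e) = op e zero := by rw [heq, op_zero]
  exact cancel hp (perp_zero e) this

lemma compl_idem {π π' : E → E} (hπ : Exocentral π) (hc : IsComplMap π π')
    (e : E) : π' (π' e) = π' e := by
  obtain ⟨hp, he⟩ := hc (π' e)
  rw [compl_map_zero hπ hc e, zero_op] at he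
  exact he

lemma fix_of_le {π : E → E} (hπ : Exocentral π) {z x : E} (hz : π z = z)
    (hx : le x z) : π x = x := by
  obtain ⟨d, hxd, rfl⟩ := hx
  have hsum : op (π x) (π d) = op x d := by rw [← hπ.op_map hxd, hz]
  obtain ⟨u, hu, hxu⟩ := hπ.dec x
  obtain ⟨v, hv, hdv⟩ := hπ.dec d
  have hperp' : perp (op (π x) u) (op (π d) v) := by rw [hxu, hdv]; exact hxd
  obtain ⟨hP, hE⟩ := exchange hu hv hperp'
  have hE2 : op (op (π x) (π d)) (op u v) = op (op (π x) (π d)) zero := by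
    rw [hE, hxu, hdv, hsum, op_zero]
  have huv0 : op u v = zero := cancel hP (perp_zero _) hE2
  have hule : le u x := ⟨π x, perp_comm hu, by rw [op_comm (perp_comm hu), hxu]⟩
  have hvle : le v d := ⟨π d, perp_comm hv, by rw [op_comm (perp_comm hv), hdv]⟩
  obtain ⟨hu0, -⟩ := pos (perp_of_le hule hvle hxd) huv0
  rw [hu0, op_zero] at hxu
  exact hxu

lemma compl_exocentral {π π' : E → E} (hπ : Exocentral π)
    (hc : IsComplMap π π') : Exocentral π' := by
  have key : ∀ {e f : E}, perp e f →
      perp (π' e) (π' f) ∧ π' (op e f) = op (π' e) (π' f) := by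
    intro e f hef
    obtain ⟨hpe, heqe⟩ := hc e
    obtain ⟨hpf, heqf⟩ := hc f
    have hef' : perp (op (π e) (π' e)) (op (π f) (π' f)) := by
      rw [heqe, heqf]; exact hef
    obtain ⟨hP, hE⟩ := exchange hpe hpf hef'
    rw [heqe, heqf] at hE
    obtain ⟨hp2, heq2⟩ := hc (op e f)
    rw [hπ.op_map hef] at hp2 heq2
    have hle_e : le (π' e) e := ⟨π e, perp_comm hpe,
      by rw [op_comm (perp_comm hpe), heqe]⟩
    have hle_f : le (π' f) f := ⟨π f, perp_comm hpf,
      by rw [op_comm (perp_comm hpf), heqf]⟩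
    have hperp'' : perp (π' e) (π' f) := perp_of_le hle_e hle_f hef
    have : op (op (π e) (π f)) (π' (op e f)) =
        op (op (π e) (π f)) (op (π' e) (π' f)) := by rw [heq2, hE]
    exact ⟨hperp'', cancel hp2 hP this⟩
  refine ⟨fun h => (key h).1, fun h => (key h).2, compl_idem hπ hc, ?_, ?_⟩
  · intro e
    obtain ⟨hp, he⟩ := hc e
    exact ⟨π e, perp_comm hp, by rw [op_comm (perp_comm hp), he]⟩
  · intro e f h1 h2
    -- h1 : π' e = e, h2 : π' f = zero
    have hπe : π e = zero := by
      obtain ⟨hp, he⟩ := hc e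
      rw [h1] at hp he
      have : op e (π e) = op e zero := by
        rw [op_zero, ← op_comm hp, he]
      exact cancel (perp_comm hp) (perp_zero e) this
    have hπf : π f = f := by
      obtain ⟨hp, he⟩ := hc f
      rw [h2, op_zero] at he
      exact he
    exact perp_comm (hπ.orth hπf hπe)

end GEA

/-- the set of exocentral mappings splitting an SK-congruence is
a boolean subalgebra of the exocenter: it contains the zero map and the
identity, and is closed under complementation and under meets (compositions). -/
theorem splitting_maps_boolean_subalgebra {E : Type u} [GEA E]
    (sim : E → E → Prop) (hsim : GEA.SKCong E sim) :
    (GEA.Exocentral (fun _ : E => GEA.zero) ∧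
      GEA.IsComplMap (fun _ : E => GEA.zero) (id : E → E) ∧
      GEA.Splits sim (fun _ : E => GEA.zero) (id : E → E)) ∧
    (GEA.Exocentral (id : E → E) ∧
      GEA.IsComplMap (id : E → E) (fun _ : E => GEA.zero) ∧
      GEA.Splits sim (id : E → E) (fun _ : E => GEA.zero)) ∧
    (∀ π π' : E → E, GEA.Exocentral π → GEA.IsComplMap π π' →
      GEA.Splits sim π π' →
      GEA.Exocentral π' ∧ GEA.IsComplMap π' π ∧ GEA.Splits sim π' π) ∧
    (∀ π π' ξ ξ' : E → E, GEA.Exocentral π → GEA.IsComplMap π π' →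
      GEA.Splits sim π π' → GEA.Exocentral ξ → GEA.IsComplMap ξ ξ' →
      GEA.Splits sim ξ ξ' →
      GEA.Exocentral (π ∘ ξ) ∧
      ∃ ζ' : E → E, GEA.IsComplMap (π ∘ ξ) ζ' ∧
        GEA.Splits sim (π ∘ ξ) ζ') := by
  open GEA in
  refine ⟨⟨?_, ?_, ?_⟩, ⟨?_, ?_, ?_⟩, ?_, ?_⟩
  · -- zero map exocentral
    refine ⟨fun _ => perp_zero zero, fun _ => (op_zero zero).symm,
      fun _ => rfl, fun e => ⟨e, perp_zero' e, zero_op e⟩, ?_⟩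
    intro e f he _
    exact he ▸ perp_zero' f
  · exact fun e => ⟨perp_zero' e, zero_op e⟩
  · rintro e f ⟨x, rfl⟩ - hef
    exact ⟨rfl, hsim.sk1 (hsim.symm hef)⟩
  · -- identity exocentral
    exact ⟨fun h => h, fun _ => rfl, fun _ => rfl,
      fun e => ⟨zero, perp_zero e, op_zero e⟩,
      fun {e f} _ hf => by rw [show f = GEA.zero from hf]; exact perp_zero e⟩
  · exact fun e => ⟨perp_zero e, op_zero e⟩
  · rintro e f - ⟨x, rfl⟩ hef
    exact ⟨hsim.sk1 hef, rfl⟩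
  · -- complementation
    intro π π' hπ hc hs
    refine ⟨compl_exocentral hπ hc, fun e => ?_, fun e f he hf hef => ?_⟩
    · obtain ⟨hp, heq⟩ := hc e
      exact ⟨perp_comm hp, by rw [op_comm (perp_comm hp), heq]⟩
    · obtain ⟨h1, h2⟩ := hs f e hf he (hsim.symm hef)
      exact ⟨h2, h1⟩
  · -- meets
    intro π π' ξ ξ' hπ hcπ hsπ hξ hcξ hsξ
    -- fixed-point facts for elements fixed by π ∘ ξ
    have fix_facts : ∀ e : E, π (ξ e) = e → ξ e = e ∧ π e = e := by
      intro e he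
      have h1 : GEA.le (ξ e) e := hξ.dec e
      have h2 : GEA.le e (ξ e) := by
        conv_lhs => rw [← he]
        exact hπ.dec (ξ e)
      have hξe : ξ e = e := le_antisymm' h1 h2
      have hπe : π e = e := by
        calc π e = π (ξ e) := by rw [hξe]
        _ = e := he
      exact ⟨hξe, hπe⟩
    have hexo : GEA.Exocentral (π ∘ ξ) := by
      refine ⟨fun h => hπ.perp_map (hξ.perp_map h), ?_, ?_, ?_, ?_⟩
      · intro e f h
        show π (ξ (op e f)) = op (π (ξ e)) (π (ξ f))
        rw [hξ.op_map h, hπ.op_map (hξ.perp_map h)]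
      · intro e
        show π (ξ (π (ξ e))) = π (ξ e)
        rw [fix_of_le hξ (hξ.idem e) (hπ.dec (ξ e)), hπ.idem]
      · exact fun e => le_trans' (hπ.dec (ξ e)) (hξ.dec e)
      · intro e f he hf
        obtain ⟨hξe, hπe⟩ := fix_facts e he
        have hξ'f0 : ξ (ξ' f) = zero := compl_map_zero hξ hcξ f
        have hef1 : GEA.perp e (ξ f) := hπ.orth hπe hf
        have hg : ξ (op e (ξ f)) = op e (ξ f) := by
          rw [hξ.op_map hef1, hξe, hξ.idem]
        have hg2 : GEA.perp (op e (ξ f)) (ξ' f) := hξ.orth hg hξ'f0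
        obtain ⟨-, h5, -⟩ := assoc' hef1 hg2
        rwa [(hcξ f).2] at h5
    refine ⟨hexo, fun y => op (π' (ξ y)) (ξ' y), ?_, ?_⟩
    · -- complement map
      intro e
      obtain ⟨hp1, he1⟩ := hcξ e
      obtain ⟨hp2, he2⟩ := hcπ (ξ e)
      have h3 : GEA.perp (op (π (ξ e)) (π' (ξ e))) (ξ' e) := by rwa [he2]
      obtain ⟨-, h5, h6⟩ := assoc' hp2 h3
      refine ⟨h5, ?_⟩
      show op (π (ξ e)) (op (π' (ξ e)) (ξ' e)) = e
      rw [← h6, he2, he1]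
    · -- splits
      rintro e f ⟨x, rfl⟩ ⟨y, rfl⟩ hef
      simp only [Function.comp_apply] at hef ⊢
      set e := π (ξ x) with he_def
      have hfix : π (ξ e) = e := by
        show π (ξ (π (ξ x))) = π (ξ x)
        rw [fix_of_le hξ (hξ.idem x) (hπ.dec (ξ x)), hπ.idem]
      obtain ⟨hξe, hπe⟩ := fix_facts e hfix
      -- decompose
      obtain ⟨hp2, he2⟩ := hcπ (ξ y)
      have h3 : GEA.perp (op (π (ξ y)) (π' (ξ y))) (ξ' y) := by
        rw [he2]; exact (hcξ y).1
      obtain ⟨hst, -, -⟩ := assoc' hp2 h3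
      -- hst : perp (π' (ξ y)) (ξ' y)
      obtain ⟨e₁, e₂, h12, hsum, hs1, hs2⟩ := hsim.sk3d hst hef
      have hle1 : GEA.le e₁ e := by rw [← hsum]; exact le_op_left h12
      have hle2 : GEA.le e₂ e := by rw [← hsum]; exact le_op_right h12
      have he₁ : π e₁ = e₁ := fix_of_le hπ hπe hle1
      have he₂ : ξ e₂ = e₂ := fix_of_le hξ hξe hle2
      obtain ⟨h10, h20⟩ := hsπ e₁ (π' (ξ y)) ⟨e₁, he₁⟩ ⟨ξ y, rfl⟩ hs1
      obtain ⟨h30, h40⟩ := hsξ e₂ (ξ' y) ⟨e₂, he₂⟩ ⟨y, rfl⟩ hs2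
      constructor
      · rw [← hsum, h10, h30, op_zero]
      · rw [h20, h40, op_zero]
end

section
/- Let E be a Dedekind orthocomplete GEA with SK-congruence ∼, and let (eᵢ)ᵢ∈I and (fᵢ)ᵢ∈I be orthosummable families in E with eᵢ ≲ fᵢ for all i. Then ⊕ᵢ eᵢ ≲ ⊕ᵢ fᵢ. -/
universe u

section Helpers

open GEA

variable {E : Type u} [GEA E]

lemma mygea_le_refl (a : E) : le a a := ⟨zero, perp_zero a, op_zero a⟩

lemma mygea_assoc' {d e f : E} (hde : perp d e) (hf : perp (op d e) f) :
    perp e f ∧ perp d (op e f) ∧ op d (op e f) = op (op d e) f := by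
  have hf' : perp f (op e d) := by
    rw [← op_comm hde]; exact perp_comm hf
  have hfe : perp f e := assoc_perp₁ (perp_comm hde) hf'
  have hfed : perp (op f e) d := assoc_perp₂ (perp_comm hde) hf'
  have heq : op f (op e d) = op (op f e) d := assoc_eq (perp_comm hde) hf'
  have hef : perp e f := perp_comm hfe
  have hd' : perp d (op e f) := by
    apply perp_comm; rw [op_comm hef]; exact hfed
  refine ⟨hef, hd', ?_⟩
  calc op d (op e f) = op (op e f) d := op_comm hd'
    _ = op (op f e) d := by rw [op_comm hef]
    _ = op f (op e d) := heq.symm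
    _ = op (op e d) f := by
        apply op_comm
        apply perp_comm
        rw [op_comm hde] at hf; exact hf
    _ = op (op d e) f := by rw [op_comm hde]

lemma mygea_le_trans {a b c : E} (hab : le a b) (hbc : le b c) : le a c := by
  obtain ⟨u, hau, hb⟩ := hab
  obtain ⟨v, hbv, hc⟩ := hbc
  subst hb; subst hc
  obtain ⟨huv, hauv, heq⟩ := mygea_assoc' hau hbv
  exact ⟨op u v, hauv, heq⟩

lemma mygea_sub_perp_left {a a' b : E} (h : le a a') (hb : perp a' b) :
    perp a b ∧ le (op a b) (op a' b) := by
  obtain ⟨c, hac, ha'⟩ := h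
  subst ha'
  obtain ⟨hcb, hacb, heq⟩ := mygea_assoc' hac hb
  have hacb' : perp a (op b c) := by rw [op_comm hcb] at hacb; exact hacb
  have hab : perp a b := assoc_perp₁ (perp_comm hcb) hacb'
  have habc : perp (op a b) c := assoc_perp₂ (perp_comm hcb) hacb'
  have heq2 : op a (op b c) = op (op a b) c := assoc_eq (perp_comm hcb) hacb'
  refine ⟨hab, c, habc, ?_⟩
  rw [← heq2, op_comm (perp_comm hcb)]
  exact heq

lemma mygea_sub_perp {a a' b b' : E} (ha : le a a') (hb : le b b') (h : perp a' b') :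
    perp a b ∧ le (op a b) (op a' b') := by
  obtain ⟨hba', hle1⟩ := mygea_sub_perp_left hb (perp_comm h)
  obtain ⟨hab, hle2⟩ := mygea_sub_perp_left ha (perp_comm hba')
  refine ⟨hab, mygea_le_trans hle2 ?_⟩
  rw [op_comm (perp_comm hba'), op_comm h]
  exact hle1

lemma mygea_finsum_empty {I : Type} {e : I → E} {s : Finset I} {x : E}
    (hx : FinSum e s x) (hs : s = ∅) : x = zero := by
  induction hx with
  | empty => rfl
  | cons h _ _ _ => simp at hs

lemma mygea_finsum_erase {I : Type} [DecidableEq I] {e : I → E} {s : Finset I} {z : E}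
    (hz : FinSum e s z) :
    ∀ i ∈ s, ∃ y, FinSum e (s.erase i) y ∧ perp (e i) y ∧ op (e i) y = z := by
  induction hz with
  | empty => intro i hi; simp at hi
  | @cons t j x hj hx hperp ih =>
    intro i hi
    rcases Finset.mem_cons.mp hi with hij | hit
    · subst hij
      rw [Finset.erase_cons]
      exact ⟨x, hx, hperp, rfl⟩
    · obtain ⟨y, hy, hay, haey⟩ := ih i hit
      have hba : perp (e j) (e i) := assoc_perp₁ hay (haey ▸ hperp)
      have hbay : perp (op (e j) (e i)) y := assoc_perp₂ hay (haey ▸ hperp)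
      have heq1 : op (e j) (op (e i) y) = op (op (e j) (e i)) y :=
        assoc_eq hay (haey ▸ hperp)
      have haby : perp (op (e i) (e j)) y := by
        rw [op_comm hba] at hbay; exact hbay
      obtain ⟨hby, haby', heq2⟩ := mygea_assoc' (perp_comm hba) haby
      have hji : j ∉ t.erase i := fun hc => hj (Finset.mem_of_mem_erase hc)
      have hij : j ≠ i := fun hc => hj (hc ▸ hit)
      refine ⟨op (e j) y, ?_, haby', ?_⟩
      · rw [Finset.erase_cons_of_ne hj hij]
        exact FinSum.cons _ hy hby
      · rw [heq2, op_comm (perp_comm hba), ← heq1, haey]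

lemma mygea_finsum_unique {I : Type} {e : I → E} {s : Finset I} {x x' : E}
    (hx : FinSum e s x) (hx' : FinSum e s x') : x = x' := by
  classical
  induction hx generalizing x' with
  | empty => exact (mygea_finsum_empty hx' rfl).symm
  | @cons t i x₀ hi hx₀ hperp ih =>
    obtain ⟨y, hy, _, hop⟩ := mygea_finsum_erase hx' i (Finset.mem_cons_self i t)
    rw [Finset.erase_cons] at hy
    rw [← hop, ih hy]

lemma mygea_finsum_mono {I : Type} {g f : I → E} (hle : ∀ i, le (g i) (f i))
    {s : Finset I} {y : E} (hy : FinSum f s y) :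
    ∃ x, FinSum g s x ∧ le x y := by
  induction hy with
  | empty => exact ⟨zero, FinSum.empty, mygea_le_refl zero⟩
  | @cons t i y₀ hi hy₀ hperp ih =>
    obtain ⟨x₀, hx₀, hxy⟩ := ih
    obtain ⟨hp, hle'⟩ := mygea_sub_perp (hle i) hxy hperp
    exact ⟨op (g i) x₀, FinSum.cons hi hx₀ hp, hle'⟩

end Helpers

open GEA in
/-- additivity of subequivalence over orthosummable families. -/
theorem subeq_additive {E : Type u} [GEA E]
    (sim : E → E → Prop) (hsim : GEA.SKCong E sim) (hD : GEA.DedekindOC E)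
    {I : Type} (e f : I → E) (se sf : E)
    (he : GEA.IsOrthosum e se) (hf : GEA.IsOrthosum f sf)
    (h : ∀ i : I, GEA.Subeq sim (e i) (f i)) : GEA.Subeq sim se sf := by
  classical
  choose f₁ hf₁le hf₁sim using h
  have hortho : GEA.OrthoFam f₁ := fun s => by
    obtain ⟨y, hy⟩ := hf.1 s
    obtain ⟨x, hx, _⟩ := mygea_finsum_mono hf₁le hy
    exact ⟨x, hx⟩
  have hbound : ∀ (s : Finset I) (x : E), GEA.FinSum f₁ s x → GEA.le x sf := by
    intro s x hx
    obtain ⟨y, hy⟩ := hf.1 s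
    obtain ⟨x', hx', hxy⟩ := mygea_finsum_mono hf₁le hy
    rw [mygea_finsum_unique hx hx']
    exact mygea_le_trans hxy (hf.2.1 s y hy)
  obtain ⟨m, hm⟩ := hD I f₁ hortho ⟨sf, hbound⟩
  exact ⟨m, hm.2.2 sf hbound, hsim.sk2 e f₁ se m he hm hf₁sim⟩
end

section
/- Let ∼ be an SK-congruence on a GEA E, and let c ∈ E be such that the interval E[0,c] = {e : e ≤ c} is hereditary. Then for all d ∈ E, d ∧ c = 0 implies d ⊥ c. -/
universe u

/-- if the interval `E[0,c]` is hereditary, then disjointness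
from `c` implies orthogonality to `c`. -/
theorem hereditary_interval_disjoint_perp {E : Type u} [GEA E]
    (sim : E → E → Prop) (hsim : GEA.SKCong E sim) (c : E)
    (hher : GEA.Hereditary sim {e : E | GEA.le e c}) :
    ∀ d : E, (∀ x : E, GEA.le x d → GEA.le x c → x = GEA.zero) →
      GEA.perp d c := by
  intro d hd
  by_contra hnp
  obtain ⟨e₁, f₁, he₁, hf₁, hed, hfc, hsim₁⟩ := hsim.sk4a hnp
  have hcc : c ∈ {e : E | GEA.le e c} := ⟨GEA.zero, GEA.perp_zero c, GEA.op_zero c⟩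
  have : e₁ ∈ {e : E | GEA.le e c} := hher c e₁ hcc ⟨f₁, hfc, hsim₁⟩
  exact he₁ (hd e₁ hed this)
end

section
/- Let ∼ be an SK-congruence on a GEA E and let c ∈ E. The following are equivalent: (i) for all c₁, f ∈ E, c ≥ c₁ ∼ f ⊥ c implies c₁ = f = 0; (ii) c is sharp and E[0,c] is hereditary; (iii) c is sharp and for all e ∈ E, e ∼ c implies e ≤ c; (iv) c is sharp and {f ∈ E : f ⊥ c} is hereditary. -/
universe u

namespace GEA

variable {E : Type u} [GEA E]

/- ### Auxiliary lemmas -/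

theorem le_refl' (e : E) : le e e := ⟨zero, perp_zero e, op_zero e⟩

theorem zero_le' (e : E) : le (zero : E) e :=
  ⟨e, perp_comm (perp_zero e), by rw [op_comm (perp_comm (perp_zero e)), op_zero]⟩

theorem le_trans'_s11 {d e f : E} (h1 : le d e) (h2 : le e f) : le d f := by
  obtain ⟨x, hpx, rfl⟩ := h1
  obtain ⟨y, hpy, rfl⟩ := h2
  have hyx : perp y (op x d) := by rw [← op_comm hpx]; exact perp_comm hpy
  have hpyx : perp y x := assoc_perp₁ (perp_comm hpx) hyx
  have h2' : perp (op y x) d := assoc_perp₂ (perp_comm hpx) hyx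
  have hd : perp d (op x y) := by rw [← op_comm hpyx]; exact perp_comm h2'
  refine ⟨op x y, hd, ?_⟩
  have e3 : op y (op x d) = op (op y x) d := assoc_eq (perp_comm hpx) hyx
  calc op d (op x y) = op d (op y x) := by rw [op_comm hpyx]
    _ = op (op y x) d := (op_comm h2').symm
    _ = op y (op x d) := e3.symm
    _ = op y (op d x) := by rw [← op_comm hpx]
    _ = op (op d x) y := (op_comm hpy).symm

theorem perp_of_le' {e d c : E} (h : le e d) (hp : perp d c) : perp e c := by
  obtain ⟨x, hpx, rfl⟩ := h
  exact perp_comm (assoc_perp₁ hpx (perp_comm hp))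

/-- Pair family indexed by `Bool`. -/
def pair (a b : E) : Bool → E := fun i => cond i a b

theorem finSum_pair_le {a b : E} (hab : perp a b) :
    ∀ {s : Finset Bool} {x : E}, FinSum (pair a b) s x → le x (op a b) := by
  intro s x h
  cases h with
  | empty => exact zero_le' _
  | @cons s1 i x1 hi h1 hp1 =>
    cases h1 with
    | empty =>
      cases i with
      | true => rw [op_zero]; exact ⟨b, hab, rfl⟩
      | false => rw [op_zero]; exact ⟨a, perp_comm hab, (op_comm hab).symm⟩
    | @cons s2 j x2 hj h2 hp2 =>
      have hij : i ≠ j := fun h => hi (by simp [h])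
      cases h2 with
      | empty =>
        cases i with
        | true =>
          cases j with
          | true => exact absurd rfl hij
          | false =>
            rw [op_zero]
            exact le_refl' _
        | false =>
          cases j with
          | true =>
            rw [op_zero]
            show le (op b a) (op a b)
            rw [← op_comm hab]
            exact le_refl' _
          | false => exact absurd rfl hij
      | @cons s3 k x3 hk h3 hp3 =>
        have hik : i ≠ k := fun h => hi (by simp [h])
        have hjk : j ≠ k := fun h => hj (by simp [h])
        cases i <;> cases j <;> cases k <;>
          first
            | exact absurd rfl hij
            | exact absurd rfl hik
            | exact absurd rfl hjk

theorem finSum_pair_pair {a b : E} (hab : perp a b) :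
    FinSum (pair a b) {true, false} (op a (op b zero)) := by
  have h2 : FinSum (pair a b) (Finset.cons false ∅ (by simp)) (op b zero) :=
    FinSum.cons (by simp) FinSum.empty (perp_zero b)
  have h3 : FinSum (pair a b)
      (Finset.cons true (Finset.cons false ∅ (by simp)) (by simp))
      (op a (op b zero)) :=
    FinSum.cons (by simp) h2 (by rw [op_zero]; exact hab)
  have heq : ({true, false} : Finset Bool) =
      Finset.cons true (Finset.cons false ∅ (by simp)) (by simp) := by
    ext x; simp
  rw [heq]
  exact h3

theorem orthoFam_pair {a b : E} (hab : perp a b) : OrthoFam (pair a b) := by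
  intro s
  have hcl : ∀ t : Finset Bool, t = ∅ ∨ t = {true} ∨ t = {false} ∨ t = {true, false} := by
    decide
  have hft : FinSum (pair a b) {true} (op a zero) := by
    have heq : ({true} : Finset Bool) = Finset.cons true ∅ (by simp) := by ext x; simp
    rw [heq]; exact FinSum.cons (by simp) FinSum.empty (perp_zero a)
  have hff : FinSum (pair a b) {false} (op b zero) := by
    have heq : ({false} : Finset Bool) = Finset.cons false ∅ (by simp) := by ext x; simp
    rw [heq]; exact FinSum.cons (by simp) FinSum.empty (perp_zero b)
  rcases hcl s with h | h | h | h <;> subst h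
  · exact ⟨zero, FinSum.empty⟩
  · exact ⟨op a zero, hft⟩
  · exact ⟨op b zero, hff⟩
  · exact ⟨op a (op b zero), finSum_pair_pair hab⟩

theorem isOrthosum_pair {a b : E} (hab : perp a b) : IsOrthosum (pair a b) (op a b) := by
  refine ⟨orthoFam_pair hab, fun s x h => finSum_pair_le hab h, fun bd hbd => ?_⟩
  have h := hbd {true, false} (op a (op b zero)) (finSum_pair_pair hab)
  rwa [op_zero] at h

theorem sim_op {sim : E → E → Prop} (hsim : SKCong E sim) {a b s t : E}
    (hab : perp a b) (hst : perp s t) (h1 : sim a s) (h2 : sim b t) :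
    sim (op a b) (op s t) :=
  hsim.sk2 (pair a b) (pair s t) _ _ (isOrthosum_pair hab) (isOrthosum_pair hst)
    (fun i => by cases i with | false => exact h2 | true => exact h1)

theorem main_characterizations (sim : E → E → Prop) (hsim : SKCong E sim) (c : E) :
    ((∀ c₁ f : E, le c₁ c → sim c₁ f → perp f c → c₁ = zero ∧ f = zero) ↔
      (Sharp c ∧ Hereditary sim {e : E | le e c})) ∧
    ((Sharp c ∧ Hereditary sim {e : E | le e c}) ↔
      (Sharp c ∧ ∀ e : E, sim e c → le e c)) ∧
    ((Sharp c ∧ ∀ e : E, sim e c → le e c) ↔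
      (Sharp c ∧ Hereditary sim {f : E | perp f c})) := by
  have hA_sharp : (∀ c₁ f : E, le c₁ c → sim c₁ f → perp f c → c₁ = zero ∧ f = zero) →
      Sharp c := fun hA d hle hp => (hA d d hle (hsim.refl d) hp).1
  -- (i) → (ii)
  have hAB : (∀ c₁ f : E, le c₁ c → sim c₁ f → perp f c → c₁ = zero ∧ f = zero) →
      Sharp c ∧ Hereditary sim {e : E | le e c} := by
    intro hA
    refine ⟨hA_sharp hA, ?_⟩
    intro h e hh hsub
    obtain ⟨e₁, he₁h, hee₁⟩ := hsub
    by_contra hne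
    obtain ⟨e', d', he'0, hd'0, he'e, hd'c, hsimed⟩ := hsim.sk4b hne
    obtain ⟨x, hpx, hx⟩ := he'e
    have hsim1 : sim e₁ (op e' x) := by rw [hx]; exact hsim.symm hee₁
    obtain ⟨a, bb, hab, habe, hae', hbx⟩ := hsim.sk3d hpx hsim1
    have hac : le a c := le_trans'_s11 (le_trans'_s11 ⟨bb, hab, habe⟩ he₁h) hh
    have had : sim a d' := hsim.trans hae' hsimed
    exact hd'0 (hA a d' hac had hd'c).2
  -- (ii) → (iii)
  have hBC : Sharp c ∧ Hereditary sim {e : E | le e c} →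
      Sharp c ∧ ∀ e : E, sim e c → le e c := by
    rintro ⟨hs, hher⟩
    exact ⟨hs, fun e hec => hher c e (le_refl' c) ⟨c, le_refl' c, hec⟩⟩
  -- (iii) → (i)
  have hCA : Sharp c ∧ (∀ e : E, sim e c → le e c) →
      ∀ c₁ f : E, le c₁ c → sim c₁ f → perp f c → c₁ = zero ∧ f = zero := by
    rintro ⟨hs, hC⟩ c₁ f h1 h2 h3
    obtain ⟨x, hpx, hx⟩ := h1
    have hxc : le x c := ⟨c₁, perp_comm hpx, by rw [← op_comm hpx]; exact hx⟩
    have hfx : perp f x := perp_comm (perp_of_le' hxc (perp_comm h3))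
    have hsum : sim (op f x) c := by
      have h := sim_op hsim hfx hpx (hsim.symm h2) (hsim.refl x)
      rwa [hx] at h
    have hfc : le f c := le_trans'_s11 ⟨x, hfx, rfl⟩ (hC _ hsum)
    have hf0 : f = zero := hs f hfc h3
    have hc0 : c₁ = zero := hsim.sk1 (by rw [← hf0]; exact h2)
    exact ⟨hc0, hf0⟩
  -- (i) → (iv)
  have hAD : (∀ c₁ f : E, le c₁ c → sim c₁ f → perp f c → c₁ = zero ∧ f = zero) →
      Sharp c ∧ Hereditary sim {f : E | perp f c} := by
    intro hA
    refine ⟨hA_sharp hA, ?_⟩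
    intro h e hh hsub
    obtain ⟨e₁, he₁h, hee₁⟩ := hsub
    have he₁c : perp e₁ c := perp_of_le' he₁h hh
    by_contra hne
    obtain ⟨a, b, ha0, hb0, hae, hbc, hab⟩ := hsim.sk4a hne
    obtain ⟨x, hpx, hx⟩ := hae
    have hsim1 : sim e₁ (op a x) := by rw [hx]; exact hsim.symm hee₁
    obtain ⟨a', x', hp', heq', ha'a, hx'x⟩ := hsim.sk3d hpx hsim1
    have ha'c : perp a' c := perp_of_le' ⟨x', hp', heq'⟩ he₁c
    have hba' : sim b a' := hsim.trans (hsim.symm hab) (hsim.symm ha'a)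
    exact hb0 (hA b a' hbc hba' ha'c).1
  -- (iv) → (i)
  have hDA : Sharp c ∧ Hereditary sim {f : E | perp f c} →
      ∀ c₁ f : E, le c₁ c → sim c₁ f → perp f c → c₁ = zero ∧ f = zero := by
    rintro ⟨hs, hher⟩ c₁ f h1 h2 h3
    have hc₁c : perp c₁ c := hher f c₁ h3 ⟨f, le_refl' f, h2⟩
    have hc0 : c₁ = zero := hs c₁ h1 hc₁c
    refine ⟨hc0, hsim.sk1 (hsim.symm ?_)⟩
    rw [← hc0]; exact h2
  exact ⟨⟨hAB, fun hB => hCA (hBC hB)⟩, ⟨hBC, fun hC => hAB (hCA hC)⟩,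
    ⟨fun hC => hAD (hCA hC), fun hD => hBC (hAB (hDA hD))⟩⟩

end GEA

/-- characterizations of invariance-type conditions on `c`. -/
theorem invariance_characterizations {E : Type u} [GEA E]
    (sim : E → E → Prop) (hsim : GEA.SKCong E sim) (c : E) :
    ((∀ c₁ f : E, GEA.le c₁ c → sim c₁ f → GEA.perp f c →
        c₁ = GEA.zero ∧ f = GEA.zero) ↔
      (GEA.Sharp c ∧ GEA.Hereditary sim {e : E | GEA.le e c})) ∧
    ((GEA.Sharp c ∧ GEA.Hereditary sim {e : E | GEA.le e c}) ↔
      (GEA.Sharp c ∧ ∀ e : E, sim e c → GEA.le e c)) ∧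
    ((GEA.Sharp c ∧ ∀ e : E, sim e c → GEA.le e c) ↔
      (GEA.Sharp c ∧ GEA.Hereditary sim {f : E | GEA.perp f c})) :=
  GEA.main_characterizations sim hsim c
end
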